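/- arXiv:2501.16560 — 4 statements merged into one kernel-verified Lean document; each statement's English description precedes it below -/
import Mathlib

section
/- For every w > 0 and R > 0, there exists a unique s = s(w,R) ∈ (0,w) that maximizes σ ↦ u(w − σ) + v(R·σ) over (0, w). Furthermore, the function (w,R) ↦ s(w,R) is continuous, strictly increasing in w, and nondecreasing in R. -/
open Filter Topology Set

/-! The maximiser is the zero of the marginal cost `g(σ) = u'(w - σ) - R v'(Rσ)`, which is
minus the derivative of the objective. By the Inada conditions `g` runs from `-∞` to `+∞` on
`(0, w)`, and it is strictly increasing since `u'` and `v'` are strictly decreasing; so it has a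
unique zero `s(w, R)`, the objective is strictly maximal there, and `σ < s(w, R) ↔ g(σ) < 0`.
Everything else follows from this sign test: `g` is jointly continuous in `(w, R, σ)`, so `s` is
continuous; `g` strictly decreases in `w`, so `s` strictly increases in `w`; and
`R v'(Rσ) = φ(Rσ) / σ` with `φ c = c v'(c)` nondecreasing, so `g` is nonincreasing in `R` and `s`
is nondecreasing in `R`. -/

theorem ContinuousOn.surjOn_Ioo_of_tendsto {g : ℝ → ℝ} {a b : ℝ} (hab : a < b)
    (hg : ContinuousOn g (Ioo a b)) (ha : Tendsto g (𝓝[>] a) atBot)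
    (hb : Tendsto g (𝓝[<] b) atTop) : SurjOn g (Ioo a b) univ := by
  intro y _
  obtain ⟨x₁, hx₁y, hx₁⟩ :=
    ((ha.eventually (eventually_le_atBot y)).and (Ioo_mem_nhdsGT hab)).exists
  obtain ⟨x₂, hyx₂, hx₂⟩ :=
    ((hb.eventually (eventually_ge_atTop y)).and (Ioo_mem_nhdsLT hab)).exists
  exact isPreconnected_Ioo.intermediate_value hx₁ hx₂ hg ⟨hx₁y, hyx₂⟩

theorem StrictAntiOn.lt_of_hasDerivAt_of_eq_zero {D : Set ℝ} (hD : Convex ℝ D)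
    {F f : ℝ → ℝ} (hF : ∀ x ∈ D, HasDerivAt F (f x) x) (hf : StrictAntiOn f D) {s σ : ℝ}
    (hs : s ∈ D) (hfs : f s = 0) (hσ : σ ∈ D) (hne : σ ≠ s) : F σ < F s := by
  have hFc : ContinuousOn F D := fun x hx => (hF x hx).continuousAt.continuousWithinAt
  rcases hne.lt_or_gt with hlt | hgt
  · have hsub : Icc σ s ⊆ D := hD.ordConnected.out hσ hs
    refine strictMonoOn_of_deriv_pos (convex_Icc σ s) (hFc.mono hsub) (fun x hx => ?_)
      (left_mem_Icc.2 hlt.le) (right_mem_Icc.2 hlt.le) hlt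
    rw [interior_Icc] at hx
    rw [(hF x (hsub (Ioo_subset_Icc_self hx))).deriv, ← hfs]
    exact hf (hsub (Ioo_subset_Icc_self hx)) hs hx.2
  · have hsub : Icc s σ ⊆ D := hD.ordConnected.out hs hσ
    refine strictAntiOn_of_deriv_neg (convex_Icc s σ) (hFc.mono hsub) (fun x hx => ?_)
      (left_mem_Icc.2 hgt.le) (right_mem_Icc.2 hgt.le) hgt
    rw [interior_Icc] at hx
    rw [(hF x (hsub (Ioo_subset_Icc_self hx))).deriv, ← hfs]
    exact hf hs (hsub (Ioo_subset_Icc_self hx)) hx.1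

structure IsInadaMarginal (f : ℝ → ℝ) : Prop where
  continuousOn : ContinuousOn f (Ioi 0)
  strictAntiOn : StrictAntiOn f (Ioi 0)
  tendsto_nhdsGT_zero : Tendsto f (𝓝[>] 0) atTop

def lifetimeUtility (u v : ℝ → ℝ) (w R σ : ℝ) : ℝ := u (w - σ) + v (R * σ)

def marginalCost (u' v' : ℝ → ℝ) (w R σ : ℝ) : ℝ := u' (w - σ) - R * v' (R * σ)

section

variable {u v u' v' : ℝ → ℝ} {w R σ : ℝ}

theorem hasDerivAt_lifetimeUtility (hu : ∀ c > 0, HasDerivAt u (u' c) c)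
    (hv : ∀ c > 0, HasDerivAt v (v' c) c) (hR : 0 < R) (hσ : σ ∈ Ioo 0 w) :
    HasDerivAt (lifetimeUtility u v w R) (-marginalCost u' v' w R σ) σ := by
  have hu' := (hu (w - σ) (sub_pos.2 hσ.2)).comp σ ((hasDerivAt_id σ).const_sub w)
  have hv' := (hv (R * σ) (mul_pos hR hσ.1)).comp σ ((hasDerivAt_id σ).const_mul R)
  exact (hu'.add hv').congr_deriv (by rw [marginalCost]; ring)

theorem marginalCost_strictMonoOn (hu : StrictAntiOn u' (Ioi 0)) (hv : StrictAntiOn v' (Ioi 0))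
    (hR : 0 < R) : StrictMonoOn (marginalCost u' v' w R) (Ioo 0 w) := by
  intro σ₁ h₁ σ₂ h₂ hlt
  have hu' : u' (w - σ₁) < u' (w - σ₂) :=
    hu (sub_pos.2 h₂.2) (sub_pos.2 h₁.2) (sub_lt_sub_left hlt w)
  have hv' : v' (R * σ₂) < v' (R * σ₁) :=
    hv (mul_pos hR h₁.1) (mul_pos hR h₂.1) (mul_lt_mul_of_pos_left hlt hR)
  have := mul_lt_mul_of_pos_left hv' hR
  simp only [marginalCost]
  linarith

theorem ContinuousAt.marginalCost {X : Type*} [TopologicalSpace X] {w R σ : X → ℝ} {x : X}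
    (hu : ContinuousOn u' (Ioi 0)) (hv : ContinuousOn v' (Ioi 0)) (hw : ContinuousAt w x)
    (hR : ContinuousAt R x) (hσ : ContinuousAt σ x) (hσ₀ : 0 < σ x) (hσw : σ x < w x)
    (hR₀ : 0 < R x) :
    ContinuousAt (fun y => _root_.marginalCost u' v' (w y) (R y) (σ y)) x := by
  have hu' : ContinuousAt (fun y => u' (w y - σ y)) x :=
    (hu.continuousAt (Ioi_mem_nhds (sub_pos.2 hσw))).comp (f := fun y => w y - σ y)
      (hw.sub hσ)
  have hv' : ContinuousAt (fun y => v' (R y * σ y)) x :=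
    (hv.continuousAt (Ioi_mem_nhds (mul_pos hR₀ hσ₀))).comp (f := fun y => R y * σ y)
      (hR.mul hσ)
  exact hu'.sub (hR.mul hv')

theorem continuousOn_marginalCost (hu : ContinuousOn u' (Ioi 0)) (hv : ContinuousOn v' (Ioi 0))
    (hR : 0 < R) : ContinuousOn (marginalCost u' v' w R) (Ioo 0 w) := fun _ hσ =>
  (continuousAt_const.marginalCost hu hv continuousAt_const continuousAt_id hσ.1 hσ.2
    hR).continuousWithinAt

theorem continuousAt_marginalCost_prod (hu : ContinuousOn u' (Ioi 0))
    (hv : ContinuousOn v' (Ioi 0)) {p : ℝ × ℝ} (hR : 0 < p.2) {c : ℝ} (hc : c ∈ Ioo 0 p.1) :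
    ContinuousAt (fun q : ℝ × ℝ => marginalCost u' v' q.1 q.2 c) p :=
  continuousAt_fst.marginalCost hu hv continuousAt_snd continuousAt_const hc.1 hc.2 hR

theorem tendsto_marginalCost_nhdsGT_zero (hu : ContinuousOn u' (Ioi 0))
    (hv : Tendsto v' (𝓝[>] 0) atTop) (hw : 0 < w) (hR : 0 < R) :
    Tendsto (marginalCost u' v' w R) (𝓝[>] 0) atBot := by
  have hu' : Tendsto (fun σ => u' (w - σ)) (𝓝[>] 0) (𝓝 (u' w)) := by
    have := ((hu.continuousAt (Ioi_mem_nhds hw)).tendsto.comp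
      ((continuous_sub_left w).tendsto' 0 w (sub_zero w)))
    exact this.mono_left nhdsWithin_le_nhds
  have hRσ : Tendsto (fun σ => R * σ) (𝓝[>] 0) (𝓝[>] 0) :=
    tendsto_nhdsWithin_iff.2 ⟨((continuous_const_mul R).tendsto' 0 0 (mul_zero R)).mono_left
      nhdsWithin_le_nhds, eventually_mem_nhdsWithin.mono fun σ hσ => mul_pos hR hσ⟩
  have hv' := tendsto_neg_atTop_atBot.comp (Tendsto.const_mul_atTop hR (hv.comp hRσ))
  exact (hu'.add_atBot hv').congr fun σ => (sub_eq_add_neg _ _).symm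

theorem tendsto_marginalCost_nhdsLT (hu : Tendsto u' (𝓝[>] 0) atTop)
    (hv : ContinuousOn v' (Ioi 0)) (hw : 0 < w) (hR : 0 < R) :
    Tendsto (marginalCost u' v' w R) (𝓝[<] w) atTop := by
  have hwσ : Tendsto (fun σ => w - σ) (𝓝[<] w) (𝓝[>] 0) := by
    have := (map_subLeft_nhdsLT (c := w) (a := w)).le
    rwa [sub_self] at this
  have hv' : Tendsto (fun σ => -(R * v' (R * σ))) (𝓝[<] w) (𝓝 (-(R * v' (R * w)))) := by
    have := ((hv.continuousAt (Ioi_mem_nhds (mul_pos hR hw))).tendsto.comp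
      ((continuous_const_mul R).tendsto w))
    exact ((this.const_mul R).neg).mono_left nhdsWithin_le_nhds
  exact ((hu.comp hwσ).atTop_add hv').congr fun σ => (sub_eq_add_neg _ _).symm

theorem exists_marginalCost_eq_zero (hu : IsInadaMarginal u') (hv : IsInadaMarginal v')
    (hw : 0 < w) (hR : 0 < R) : ∃ s ∈ Ioo 0 w, marginalCost u' v' w R s = 0 :=
  ContinuousOn.surjOn_Ioo_of_tendsto hw
    (continuousOn_marginalCost hu.continuousOn hv.continuousOn hR)
    (tendsto_marginalCost_nhdsGT_zero hu.continuousOn hv.tendsto_nhdsGT_zero hw hR)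
    (tendsto_marginalCost_nhdsLT hu.tendsto_nhdsGT_zero hv.continuousOn hw hR) (mem_univ 0)

-- Junk when `w ≤ 0` or `R ≤ 0`, where `marginalCost` need not vanish on `(0, w)`.
noncomputable def optSaving (u' v' : ℝ → ℝ) (w R : ℝ) : ℝ :=
  Classical.epsilon fun s => s ∈ Ioo 0 w ∧ marginalCost u' v' w R s = 0

theorem optSaving_spec (hu : IsInadaMarginal u') (hv : IsInadaMarginal v') (hw : 0 < w)
    (hR : 0 < R) :
    optSaving u' v' w R ∈ Ioo 0 w ∧ marginalCost u' v' w R (optSaving u' v' w R) = 0 :=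
  Classical.epsilon_spec (exists_marginalCost_eq_zero hu hv hw hR)

theorem marginalCost_neg_iff_lt_optSaving (hu : IsInadaMarginal u') (hv : IsInadaMarginal v')
    (hR : 0 < R) (hσ : σ ∈ Ioo 0 w) : marginalCost u' v' w R σ < 0 ↔ σ < optSaving u' v' w R := by
  obtain ⟨hs, hs₀⟩ := optSaving_spec hu hv (hσ.1.trans hσ.2) hR
  rw [← hs₀]
  exact (marginalCost_strictMonoOn hu.strictAntiOn hv.strictAntiOn hR).lt_iff_lt hσ hs

theorem marginalCost_pos_iff_optSaving_lt (hu : IsInadaMarginal u') (hv : IsInadaMarginal v')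
    (hR : 0 < R) (hσ : σ ∈ Ioo 0 w) : 0 < marginalCost u' v' w R σ ↔ optSaving u' v' w R < σ := by
  obtain ⟨hs, hs₀⟩ := optSaving_spec hu hv (hσ.1.trans hσ.2) hR
  rw [← hs₀]
  exact (marginalCost_strictMonoOn hu.strictAntiOn hv.strictAntiOn hR).lt_iff_lt hs hσ

theorem lifetimeUtility_lt_lifetimeUtility_optSaving (hu : IsInadaMarginal u')
    (hv : IsInadaMarginal v') (hu' : ∀ c > 0, HasDerivAt u (u' c) c)
    (hv' : ∀ c > 0, HasDerivAt v (v' c) c) (hR : 0 < R) (hσ : σ ∈ Ioo 0 w)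
    (hne : σ ≠ optSaving u' v' w R) :
    lifetimeUtility u v w R σ < lifetimeUtility u v w R (optSaving u' v' w R) := by
  obtain ⟨hs, hs₀⟩ := optSaving_spec hu hv (hσ.1.trans hσ.2) hR
  exact (marginalCost_strictMonoOn hu.strictAntiOn hv.strictAntiOn hR).neg
    |>.lt_of_hasDerivAt_of_eq_zero (convex_Ioo 0 w)
      (fun x hx => hasDerivAt_lifetimeUtility hu' hv' hR hx) hs (neg_eq_zero.2 hs₀) hσ hne

theorem eventually_lt_optSaving (hu : IsInadaMarginal u') (hv : IsInadaMarginal v')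
    {p : ℝ × ℝ} (hR : 0 < p.2) {c : ℝ} (hc : c ∈ Ioo 0 p.1)
    (hcs : c < optSaving u' v' p.1 p.2) : ∀ᶠ q in 𝓝 p, c < optSaving u' v' q.1 q.2 := by
  have hneg := (marginalCost_neg_iff_lt_optSaving hu hv hR hc).2 hcs
  have hcont := continuousAt_marginalCost_prod hu.continuousOn hv.continuousOn hR hc
  filter_upwards [hcont.eventually_lt_const hneg, continuousAt_fst.eventually_const_lt hc.2,
    continuousAt_snd.eventually_const_lt hR] with q hq hcq hRq
  exact (marginalCost_neg_iff_lt_optSaving hu hv hRq ⟨hc.1, hcq⟩).1 hq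

theorem eventually_optSaving_lt (hu : IsInadaMarginal u') (hv : IsInadaMarginal v')
    {p : ℝ × ℝ} (hR : 0 < p.2) {c : ℝ} (hc : c ∈ Ioo 0 p.1)
    (hcs : optSaving u' v' p.1 p.2 < c) : ∀ᶠ q in 𝓝 p, optSaving u' v' q.1 q.2 < c := by
  have hpos := (marginalCost_pos_iff_optSaving_lt hu hv hR hc).2 hcs
  have hcont := continuousAt_marginalCost_prod hu.continuousOn hv.continuousOn hR hc
  filter_upwards [hcont.eventually_const_lt hpos, continuousAt_fst.eventually_const_lt hc.2,
    continuousAt_snd.eventually_const_lt hR] with q hq hcq hRq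
  exact (marginalCost_pos_iff_optSaving_lt hu hv hRq ⟨hc.1, hcq⟩).1 hq

theorem continuousOn_optSaving (hu : IsInadaMarginal u') (hv : IsInadaMarginal v') :
    ContinuousOn (fun p : ℝ × ℝ => optSaving u' v' p.1 p.2) (Ioi 0 ×ˢ Ioi 0) := by
  refine continuousOn_of_forall_continuousAt fun p ⟨hw, hR⟩ => ?_
  obtain ⟨hs₀, hs_w⟩ := (optSaving_spec hu hv hw hR).1
  refine tendsto_order.2 ⟨fun b hb => ?_, fun b hb => ?_⟩
  · obtain ⟨c, hbc, hcs⟩ := exists_between (max_lt hb hs₀)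
    filter_upwards [eventually_lt_optSaving hu hv hR
      ⟨(le_max_right b 0).trans_lt hbc, hcs.trans hs_w⟩ hcs] with q hq
    exact (le_max_left b 0).trans_lt (hbc.trans hq)
  · obtain ⟨c, hsc, hcb⟩ := exists_between (lt_min hb hs_w)
    filter_upwards [eventually_optSaving_lt hu hv hR
      ⟨hs₀.trans hsc, hcb.trans_le (min_le_right b p.1)⟩ hsc] with q hq
    exact hq.trans (hcb.trans_le (min_le_left b p.1))

theorem optSaving_strictMonoOn_wealth (hu : IsInadaMarginal u') (hv : IsInadaMarginal v')
    (hR : 0 < R) : StrictMonoOn (fun w => optSaving u' v' w R) (Ioi 0) := by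
  intro w₁ hw₁ w₂ _ hw
  obtain ⟨⟨hs₀, hs_w⟩, hs⟩ := optSaving_spec hu hv hw₁ hR
  have hdec : marginalCost u' v' w₂ R (optSaving u' v' w₁ R) < 0 := by
    rw [← hs]
    exact sub_lt_sub_right (hu.strictAntiOn (sub_pos.2 hs_w) (sub_pos.2 (hs_w.trans hw))
      (sub_lt_sub_right hw _)) _
  exact (marginalCost_neg_iff_lt_optSaving hu hv hR ⟨hs₀, hs_w.trans hw⟩).1 hdec

theorem monotoneOn_mul_apply_mul (hv : MonotoneOn (fun c => c * v' c) (Ioi 0)) (hσ : 0 < σ) :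
    MonotoneOn (fun R => R * v' (R * σ)) (Ioi 0) := by
  intro R₁ hR₁ R₂ hR₂ hR
  have := hv (mul_pos hR₁ hσ) (mul_pos hR₂ hσ) (mul_le_mul_of_nonneg_right hR hσ.le)
  simp only [mul_right_comm _ σ] at this
  exact le_of_mul_le_mul_right this hσ

theorem optSaving_monotoneOn_rate (hu : IsInadaMarginal u') (hv : IsInadaMarginal v')
    (hcv : MonotoneOn (fun c => c * v' c) (Ioi 0)) (hw : 0 < w) :
    MonotoneOn (fun R => optSaving u' v' w R) (Ioi 0) := by
  intro R₁ hR₁ R₂ hR₂ hR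
  obtain ⟨hs, hs₀⟩ := optSaving_spec hu hv hw hR₁
  have hinc : marginalCost u' v' w R₂ (optSaving u' v' w R₁) ≤ 0 := by
    rw [← hs₀]
    exact sub_le_sub_left (monotoneOn_mul_apply_mul hcv hs.1 hR₁ hR₂ hR) _
  exact not_lt.1 fun hlt => ((marginalCost_pos_iff_optSaving_lt hu hv hR₂ hs).2 hlt).not_ge hinc

end

theorem stmt1_general (u v u' v' : ℝ → ℝ)
    (hu : ∀ c > (0:ℝ), HasDerivAt u (u' c) c)
    (hu'cont : ContinuousOn u' (Set.Ioi 0))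
    (hu'anti : StrictAntiOn u' (Set.Ioi 0))
    (hu'inf : Tendsto u' (nhdsWithin 0 (Set.Ioi 0)) atTop)
    (hv : ∀ c > (0:ℝ), HasDerivAt v (v' c) c)
    (hv'cont : ContinuousOn v' (Set.Ioi 0))
    (hv'anti : StrictAntiOn v' (Set.Ioi 0))
    (hv'inf : Tendsto v' (nhdsWithin 0 (Set.Ioi 0)) atTop)
    (hcv' : MonotoneOn (fun c => c * v' c) (Set.Ioi 0)) :
    ∃ sf : ℝ → ℝ → ℝ,
      (∀ w > (0:ℝ), ∀ R > (0:ℝ),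
        sf w R ∈ Set.Ioo 0 w ∧
        ∀ σ ∈ Set.Ioo (0:ℝ) w, σ ≠ sf w R →
          u (w - σ) + v (R * σ) < u (w - sf w R) + v (R * sf w R)) ∧
      ContinuousOn (fun wR : ℝ × ℝ => sf wR.1 wR.2) (Set.Ioi 0 ×ˢ Set.Ioi 0) ∧
      (∀ R > (0:ℝ), StrictMonoOn (fun w => sf w R) (Set.Ioi 0)) ∧
      (∀ w > (0:ℝ), MonotoneOn (fun R => sf w R) (Set.Ioi 0)) := by
  have hU : IsInadaMarginal u' := ⟨hu'cont, hu'anti, hu'inf⟩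
  have hV : IsInadaMarginal v' := ⟨hv'cont, hv'anti, hv'inf⟩
  refine ⟨optSaving u' v', fun w hw R hR => ⟨(optSaving_spec hU hV hw hR).1, ?_⟩,
    continuousOn_optSaving hU hV, fun R hR => optSaving_strictMonoOn_wealth hU hV hR,
    fun w hw => optSaving_monotoneOn_rate hU hV hcv' hw⟩
  exact fun σ hσ hne => lifetimeUtility_lt_lifetimeUtility_optSaving hU hV hu hv hR hσ hne

/-- Lemma `lem:s`: for additively separable utility
`u(w - σ) + v(R σ)` with `u, v` continuously differentiable, `u', v' > 0`
strictly decreasing, Inada conditions, and `c ↦ c v'(c)` nondecreasing, there is a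
unique interior maximizer `s(w,R) ∈ (0,w)`, and `(w,R) ↦ s(w,R)` is continuous,
strictly increasing in `w`, and nondecreasing in `R`. -/
theorem stmt1 (u v u' v' : ℝ → ℝ)
    (hu : ∀ c > (0:ℝ), HasDerivAt u (u' c) c)
    (hu'cont : ContinuousOn u' (Set.Ioi 0))
    (hu'pos : ∀ c > (0:ℝ), 0 < u' c)
    (hu'anti : StrictAntiOn u' (Set.Ioi 0))
    (hu'inf : Tendsto u' (nhdsWithin 0 (Set.Ioi 0)) atTop)
    (hv : ∀ c > (0:ℝ), HasDerivAt v (v' c) c)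
    (hv'cont : ContinuousOn v' (Set.Ioi 0))
    (hv'pos : ∀ c > (0:ℝ), 0 < v' c)
    (hv'anti : StrictAntiOn v' (Set.Ioi 0))
    (hv'inf : Tendsto v' (nhdsWithin 0 (Set.Ioi 0)) atTop)
    (hcv' : MonotoneOn (fun c => c * v' c) (Set.Ioi 0)) :
    ∃ sf : ℝ → ℝ → ℝ,
      (∀ w > (0:ℝ), ∀ R > (0:ℝ),
        sf w R ∈ Set.Ioo 0 w ∧
        ∀ σ ∈ Set.Ioo (0:ℝ) w, σ ≠ sf w R →
          u (w - σ) + v (R * σ) < u (w - sf w R) + v (R * sf w R)) ∧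
      ContinuousOn (fun wR : ℝ × ℝ => sf wR.1 wR.2) (Set.Ioi 0 ×ˢ Set.Ioi 0) ∧
      (∀ R > (0:ℝ), StrictMonoOn (fun w => sf w R) (Set.Ioi 0)) ∧
      (∀ w > (0:ℝ), MonotoneOn (fun R => sf w R) (Set.Ioi 0)) :=
  stmt1_general u v u' v' hu hu'cont hu'anti hu'inf hv hv'cont hv'anti hv'inf hcv'
end

section
/- For every k > 0 and p ≥ 0, the equation G·x + p = s(f(k) − k·f'(k), f'(x)) has at most one solution x > 0; when it exists, denote it x = g(k,p). Moreover: (1) for every k > 0 the solution g(k,0) exists, and there exists K > 0 such that g(k,0) < k for all k ≥ K; (2) on its domain, g is continuous, strictly increasing in k, and strictly decreasing in p; (3) if g(k,p) exists, k' ≥ k, and 0 ≤ p' ≤ p, then g(k',p') exists and g(k,p) ≤ g(k',p'). -/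
open Filter Topology Set

noncomputable section

/-- Standing assumptions on the production function `f` with derivative `f'` and
second derivative `f''`: `f : (0,∞) → (0,∞)` is twice continuously differentiable,
`f' > 0`, `f'' < 0`, `f'(k) → ∞` as `k → 0+`, and `lim_{k→∞} f'(k) < G`. -/
def ProdAssump (G : ℝ) (f f' f'' : ℝ → ℝ) : Prop :=
  0 < G ∧
  (∀ k > (0:ℝ), 0 < f k) ∧
  (∀ k > (0:ℝ), HasDerivAt f (f' k) k) ∧
  (∀ k > (0:ℝ), HasDerivAt f' (f'' k) k) ∧
  ContinuousOn f'' (Ioi 0) ∧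
  (∀ k > (0:ℝ), 0 < f' k) ∧
  (∀ k > (0:ℝ), f'' k < 0) ∧
  Tendsto f' (nhdsWithin 0 (Ioi 0)) atTop ∧
  (∃ L < G, Tendsto f' atTop (nhds L))

/-- Standing assumptions on the savings function: continuous, `0 < s(w,R) < w`,
strictly increasing in `w`, nondecreasing in `R`. -/
def SavAssump (s : ℝ → ℝ → ℝ) : Prop :=
  ContinuousOn (fun wR : ℝ × ℝ => s wR.1 wR.2) (Ioi 0 ×ˢ Ioi 0) ∧
  (∀ w > (0:ℝ), ∀ R > (0:ℝ), 0 < s w R ∧ s w R < w) ∧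
  (∀ R > (0:ℝ), StrictMonoOn (fun w => s w R) (Ioi 0)) ∧
  (∀ w > (0:ℝ), MonotoneOn (fun R => s w R) (Ioi 0))

/-- The savings function arises from a continuous, quasi-concave, strictly increasing
utility `U` on `(0,∞)²`: `s w R` is the unique maximizer of `σ ↦ U (w - σ) (R σ)`
over `(0, w)`. -/
def SavFromUtility (s : ℝ → ℝ → ℝ) : Prop :=
  ∃ U : ℝ → ℝ → ℝ,
    ContinuousOn (fun c : ℝ × ℝ => U c.1 c.2) (Ioi 0 ×ˢ Ioi 0) ∧
    QuasiconcaveOn ℝ (Ioi 0 ×ˢ Ioi 0) (fun c : ℝ × ℝ => U c.1 c.2) ∧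
    (∀ c c' : ℝ × ℝ, c ∈ Ioi (0:ℝ) ×ˢ Ioi (0:ℝ) → c' ∈ Ioi (0:ℝ) ×ˢ Ioi (0:ℝ) →
      c.1 ≤ c'.1 → c.2 ≤ c'.2 → c ≠ c' → U c.1 c.2 < U c'.1 c'.2) ∧
    (∀ w > (0:ℝ), ∀ R > (0:ℝ), s w R ∈ Ioo 0 w ∧
      ∀ σ ∈ Ioo (0:ℝ) w, σ ≠ s w R → U (w - σ) (R * σ) < U (w - s w R) (R * s w R))

/-- An equilibrium: sequences `k, p` with `k t > 0`, `p t ≥ 0`, `k 0 = k₀`,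
the capital accumulation equation and the no-arbitrage price equation. -/
def IsEquilibrium (G : ℝ) (f f' : ℝ → ℝ) (s : ℝ → ℝ → ℝ) (k0 : ℝ) (d : ℕ → ℝ)
    (k p : ℕ → ℝ) : Prop :=
  (∀ t, 0 < k t) ∧ (∀ t, 0 ≤ p t) ∧ k 0 = k0 ∧
  (∀ t, G * k (t + 1) + p t = s (f (k t) - k t * f' (k t)) (f' (k (t + 1)))) ∧
  (∀ t, p (t + 1) = f' (k (t + 1)) / G * p t - d (t + 1))

/-- Arrow–Debreu date-0 price `q_t = 1/(R_1 ⋯ R_t)` where `R_t = f'(k_t)`. -/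
def qseq (f' : ℝ → ℝ) (k : ℕ → ℝ) (t : ℕ) : ℝ :=
  (∏ i ∈ Finset.range t, f' (k (i + 1)))⁻¹

/-- Undetrended dividend `D_t = G^t d_t`. -/
def Dseq (G : ℝ) (d : ℕ → ℝ) (t : ℕ) : ℝ := G ^ t * d t

/-- Detrended fundamental value `v_t = G^{-t} q_t^{-1} ∑_{s>t} q_s D_s`. -/
def fundval (G : ℝ) (f' : ℝ → ℝ) (k : ℕ → ℝ) (d : ℕ → ℝ) (t : ℕ) : ℝ :=
  (G ^ t)⁻¹ * (qseq f' k t)⁻¹ * ∑' n : ℕ, qseq f' k (t + 1 + n) * Dseq G d (t + 1 + n)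

/-- Detrended bubble component `b_t = p_t - v_t`. -/
def bubble (G : ℝ) (f' : ℝ → ℝ) (k p : ℕ → ℝ) (d : ℕ → ℝ) (t : ℕ) : ℝ :=
  p t - fundval G f' k d t

/-- An equilibrium is bubbleless if `b_t = 0` for all `t`. -/
def Bubbleless (G : ℝ) (f' : ℝ → ℝ) (k p : ℕ → ℝ) (d : ℕ → ℝ) : Prop :=
  ∀ t, bubble G f' k p d t = 0

/-- An equilibrium is asymptotically bubbly if `liminf_{t→∞} b_t > 0`. -/
def AsympBubbly (G : ℝ) (f' : ℝ → ℝ) (k p : ℕ → ℝ) (d : ℕ → ℝ) : Prop :=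
  0 < atTop.liminf (bubble G f' k p d)

/-- Long-run dividend growth rate `G_d = limsup_{t→∞} D_t^{1/t}` (as an extended real). -/
def GdGrowth (G : ℝ) (d : ℕ → ℝ) : EReal :=
  atTop.limsup (fun t : ℕ => ((Dseq G d t ^ ((t : ℝ)⁻¹) : ℝ) : EReal))

/-- `x` solves the equation `G x + p = s(f(k) - k f'(k), f'(x))` with `x > 0`;
when the solution exists it is unique and denoted `g(k,p)`. -/
def IsGsol (G : ℝ) (f f' : ℝ → ℝ) (s : ℝ → ℝ → ℝ) (k p x : ℝ) : Prop :=
  0 < x ∧ G * x + p = s (f k - k * f' k) (f' x)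

/-- Set of positive steady states: `𝒦 = {k > 0 : g(k,0) = k}`. -/
def Ksteady (G : ℝ) (f f' : ℝ → ℝ) (s : ℝ → ℝ → ℝ) : Set ℝ :=
  {k : ℝ | 0 < k ∧ IsGsol G f f' s k 0 k}

/-- The equilibrium set `𝒫₀` of initial prices. -/
def P0set (G : ℝ) (f f' : ℝ → ℝ) (s : ℝ → ℝ → ℝ) (k0 : ℝ) (d : ℕ → ℝ) : Set ℝ :=
  {p0 : ℝ | ∃ k p : ℕ → ℝ, IsEquilibrium G f f' s k0 d k p ∧ p 0 = p0}

/-- Domain of `g`: pairs `(k,p)` with `k > 0`, `p ≥ 0` for which the equation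
`G x + p = s(f(k) - k f'(k), f'(x))` has a (necessarily unique) solution `x > 0`. -/
def domg (G : ℝ) (f f' : ℝ → ℝ) (s : ℝ → ℝ → ℝ) : Set (ℝ × ℝ) :=
  {kp : ℝ × ℝ | 0 < kp.1 ∧ 0 ≤ kp.2 ∧ ∃ x : ℝ, IsGsol G f f' s kp.1 kp.2 x}

/-!
Write `w(k) = f(k) - k f'(k)` for the wage. For fixed `k` and `p` the excess savings
`s(w(k), f'(x)) - (G x + p)` is strictly decreasing in `x`, because `f'` decreases and `s` is
nondecreasing in `R`; so `g(k,p)` is its unique positive root, and the sign of excess savings at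
a point `c` tells on which side of `c` the root lies. Excess savings is negative once
`G x ≥ w(k)`, and for `p = 0` nonnegative at small `x`, so the intermediate value theorem gives
`g(k,0)`. Concavity of `f` makes `w` positive and strictly increasing (`w' = -k f'' > 0`), hence
excess savings increases in `k` and decreases in `p`: this gives monotonicity, the comparison
property and, with continuity in `(k,p)`, continuity of `g`. Since `lim f' < G`, eventually
`f(k) < G k`, and then `G g(k,0) < w(k) < f(k) < G k`.
-/

lemma ConcaveOn.le_add_mul_sub_of_hasDerivAt {S : Set ℝ} {φ : ℝ → ℝ} {a b d : ℝ}
    (hφ : ConcaveOn ℝ S φ) (ha : a ∈ S) (hb : b ∈ S) (hd : HasDerivAt φ d a) :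
    φ b ≤ φ a + d * (b - a) := by
  rcases lt_trichotomy a b with hab | rfl | hba
  · have := hφ.slope_le_of_hasDerivAt ha hb hab hd
    rw [slope_def_field, div_le_iff₀ (sub_pos.2 hab)] at this
    linarith
  · simp
  · have := hφ.le_slope_of_hasDerivAt hb ha hba hd
    rw [slope_def_field, le_div_iff₀ (sub_pos.2 hba)] at this
    linarith

/- If `b < g a` then `F a b > 0`, which persists for nearby parameters and forces `b < g q`
there; symmetrically for `b > g a`. -/
lemma continuousOn_of_strictAntiOn_of_apply_eq_zero {α : Type*} [TopologicalSpace α]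
    {S : Set α} {F : α → ℝ → ℝ} {g : α → ℝ}
    (hanti : ∀ a ∈ S, StrictAntiOn (F a) (Ioi 0))
    (hcont : ∀ a ∈ S, ∀ b > (0:ℝ), ContinuousAt (fun q => F q b) a)
    (hg : ∀ a ∈ S, 0 < g a ∧ F a (g a) = 0) : ContinuousOn g S := by
  intro a ha
  obtain ⟨hga, hFa⟩ := hg a ha
  refine tendsto_order.2 ⟨fun b hb => ?_, fun b hb => ?_⟩
  · rcases le_or_gt b 0 with hb0 | hb0
    · filter_upwards [self_mem_nhdsWithin] with q hq
      exact hb0.trans_lt (hg q hq).1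
    have hpos : 0 < F a b := hFa ▸ hanti a ha hb0 hga hb
    filter_upwards [nhdsWithin_le_nhds ((hcont a ha b hb0).eventually (eventually_gt_nhds hpos)),
      self_mem_nhdsWithin] with q hFq hq
    exact ((hanti q hq).lt_iff_gt (hg q hq).1 hb0).1 (by rwa [(hg q hq).2])
  · have hb0 : 0 < b := hga.trans hb
    have hneg : F a b < 0 := hFa ▸ hanti a ha hga hb0 hb
    filter_upwards [nhdsWithin_le_nhds ((hcont a ha b hb0).eventually (eventually_lt_nhds hneg)),
      self_mem_nhdsWithin] with q hFq hq
    exact ((hanti q hq).lt_iff_gt hb0 (hg q hq).1).1 (by rwa [(hg q hq).2])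

def wage (f f' : ℝ → ℝ) (k : ℝ) : ℝ := f k - k * f' k

def excessSaving (G : ℝ) (f f' : ℝ → ℝ) (s : ℝ → ℝ → ℝ) (k p x : ℝ) : ℝ :=
  s (wage f f' k) (f' x) - (G * x + p)

variable {G : ℝ} {f f' f'' : ℝ → ℝ} {s : ℝ → ℝ → ℝ}

namespace ProdAssump

lemma strictAntiOn_deriv (hf : ProdAssump G f f' f'') : StrictAntiOn f' (Ioi 0) := by
  obtain ⟨-, -, -, hdf', -, -, hf''neg, -⟩ := hf
  refine strictAntiOn_of_deriv_neg (convex_Ioi 0)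
    (fun k hk => (hdf' k hk).continuousAt.continuousWithinAt) fun k hk => ?_
  rw [interior_Ioi] at hk
  exact (hdf' k hk).deriv ▸ hf''neg k hk

lemma concaveOn (hf : ProdAssump G f f' f'') : ConcaveOn ℝ (Ioi 0) f := by
  obtain ⟨-, -, hdf, hdf', -, -, hf''neg, -⟩ := hf
  refine concaveOn_of_hasDerivWithinAt2_nonpos (f' := f') (f'' := f'') (convex_Ioi 0)
    (fun k hk => (hdf k hk).continuousAt.continuousWithinAt) ?_ ?_ ?_ <;>
  simp only [interior_Ioi]
  · exact fun k hk => (hdf k hk).hasDerivWithinAt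
  · exact fun k hk => (hdf' k hk).hasDerivWithinAt
  · exact fun k hk => (hf''neg k hk).le

lemma le_tangent (hf : ProdAssump G f f' f'') {a b : ℝ} (ha : 0 < a) (hb : 0 < b) :
    f b ≤ f a + f' a * (b - a) :=
  hf.concaveOn.le_add_mul_sub_of_hasDerivAt ha hb (hf.2.2.1 a ha)

lemma hasDerivAt_wage (hf : ProdAssump G f f' f'') {k : ℝ} (hk : 0 < k) :
    HasDerivAt (wage f f') (-(k * f'' k)) k := by
  have := (hf.2.2.1 k hk).sub ((hasDerivAt_id' k).mul (hf.2.2.2.1 k hk))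
  exact this.congr_deriv (by ring)

lemma strictMonoOn_wage (hf : ProdAssump G f f' f'') : StrictMonoOn (wage f f') (Ioi 0) := by
  refine strictMonoOn_of_deriv_pos (convex_Ioi 0)
    (fun k hk => (hf.hasDerivAt_wage hk).continuousAt.continuousWithinAt) fun k hk => ?_
  rw [interior_Ioi] at hk
  rw [(hf.hasDerivAt_wage hk).deriv]
  nlinarith [hf.2.2.2.2.2.2.1 k hk, mem_Ioi.1 hk]

/- The tangent at `k` lies above the positive value `f ε`, so `w(k) > -ε f'(k)` for every
`ε ∈ (0, k)`. -/
lemma wage_nonneg (hf : ProdAssump G f f' f'') {k : ℝ} (hk : 0 < k) : 0 ≤ wage f f' k := by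
  by_contra! hneg
  have hf'k := hf.2.2.2.2.2.1 k hk
  set ε := min (k / 2) (-wage f f' k / (2 * f' k))
  have hε : 0 < ε := lt_min (by linarith) (div_pos (by linarith) (by linarith))
  have hεf' : ε * f' k < -wage f f' k := by
    calc ε * f' k ≤ -wage f f' k / (2 * f' k) * f' k := by gcongr; exact min_le_right _ _
      _ = -wage f f' k / 2 := by field_simp
      _ < -wage f f' k := by linarith
  have := hf.le_tangent hk hε
  have := hf.2.1 ε hε
  unfold wage at hεf'
  nlinarith

lemma wage_pos (hf : ProdAssump G f f' f'') {k : ℝ} (hk : 0 < k) : 0 < wage f f' k :=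
  (hf.wage_nonneg (half_pos hk)).trans_lt (hf.strictMonoOn_wage (half_pos hk) hk (by linarith))

lemma continuousAt_wage (hf : ProdAssump G f f' f'') {k : ℝ} (hk : 0 < k) :
    ContinuousAt (wage f f') k :=
  (hf.hasDerivAt_wage hk).continuousAt

/- Take `k₀` with `f'(k₀) < G`; the tangent at `k₀` has slope below `G`. -/
lemma exists_lt_mul (hf : ProdAssump G f f' f'') : ∃ K > (0:ℝ), ∀ k ≥ K, f k < G * k := by
  obtain ⟨hG, hfpos, -, -, -, -, -, -, L, hLG, hL⟩ := id hf
  obtain ⟨k₀, hk₀⟩ := eventually_atTop.1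
    ((hL.eventually (gt_mem_nhds hLG)).and (eventually_gt_atTop 0))
  obtain ⟨hf'k₀, hk₀pos⟩ := hk₀ k₀ le_rfl
  have hgap : 0 < G - f' k₀ := sub_pos.2 hf'k₀
  have hKpos : 0 < k₀ + f k₀ / (G - f' k₀) := by have := hfpos k₀ hk₀pos; positivity
  refine ⟨k₀ + f k₀ / (G - f' k₀), hKpos, fun k hk => ?_⟩
  have hK : (G - f' k₀) * (k₀ + f k₀ / (G - f' k₀)) = (G - f' k₀) * k₀ + f k₀ := by
    field_simp
  have := mul_le_mul_of_nonneg_left hk hgap.le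
  have := hf.le_tangent hk₀pos (hKpos.trans_le hk)
  nlinarith [mul_pos hG hk₀pos]

end ProdAssump

lemma isGsol_iff {k p x : ℝ} :
    IsGsol G f f' s k p x ↔ 0 < x ∧ excessSaving G f f' s k p x = 0 := by
  unfold IsGsol excessSaving wage
  exact and_congr_right fun _ => by constructor <;> intro h <;> linarith

lemma antitoneOn_savings (hf : ProdAssump G f f' f'') (hs : SavAssump s) {k : ℝ} (hk : 0 < k) :
    AntitoneOn (fun x => s (wage f f' k) (f' x)) (Ioi 0) := fun x hx y hy hxy =>
  hs.2.2.2 _ (hf.wage_pos hk) (hf.2.2.2.2.2.1 y hy) (hf.2.2.2.2.2.1 x hx)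
    (hf.strictAntiOn_deriv.antitoneOn hx hy hxy)

lemma excessSaving_strictAntiOn (hf : ProdAssump G f f' f'') (hs : SavAssump s) {k : ℝ}
    (hk : 0 < k) (p : ℝ) : StrictAntiOn (excessSaving G f f' s k p) (Ioi 0) :=
  fun x hx y hy hxy => by
    have := antitoneOn_savings hf hs hk hx hy hxy.le
    have := mul_lt_mul_of_pos_left hxy hf.1
    simp only [excessSaving] at *
    linarith

lemma excessSaving_strictMonoOn_left (hf : ProdAssump G f f' f'') (hs : SavAssump s) (p : ℝ)
    {x : ℝ} (hx : 0 < x) : StrictMonoOn (fun k => excessSaving G f f' s k p x) (Ioi 0) :=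
  fun k hk k' hk' hkk' => by
    have := hs.2.2.1 (f' x) (hf.2.2.2.2.2.1 x hx) (hf.wage_pos hk) (hf.wage_pos hk')
      (hf.strictMonoOn_wage hk hk' hkk')
    simp only [excessSaving] at *
    linarith

lemma continuousAt_savings (hf : ProdAssump G f f' f'') (hs : SavAssump s) {k x : ℝ}
    (hk : 0 < k) (hx : 0 < x) :
    ContinuousAt (fun q : ℝ × ℝ => s (wage f f' q.1) (f' q.2)) (k, x) := by
  have hs' : ContinuousAt (fun wR : ℝ × ℝ => s wR.1 wR.2) (wage f f' k, f' x) :=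
    hs.1.continuousAt ((isOpen_Ioi.prod isOpen_Ioi).mem_nhds
      ⟨hf.wage_pos hk, hf.2.2.2.2.2.1 x hx⟩)
  have hw : ContinuousAt (fun q : ℝ × ℝ => wage f f' q.1) (k, x) :=
    (hf.continuousAt_wage hk).comp' continuousAt_fst
  have hR : ContinuousAt (fun q : ℝ × ℝ => f' q.2) (k, x) :=
    (hf.2.2.2.1 x hx).continuousAt.comp' continuousAt_snd
  exact hs'.comp (f := fun q : ℝ × ℝ => (wage f f' q.1, f' q.2)) (hw.prodMk hR)

lemma continuousAt_excessSaving_param (hf : ProdAssump G f f' f'') (hs : SavAssump s)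
    {kp : ℝ × ℝ} (hk : 0 < kp.1) {x : ℝ} (hx : 0 < x) :
    ContinuousAt (fun q : ℝ × ℝ => excessSaving G f f' s q.1 q.2 x) kp :=
  ((continuousAt_savings hf hs hk hx).comp (f := fun q : ℝ × ℝ => (q.1, x))
    (continuousAt_fst.prodMk continuousAt_const)).sub (continuousAt_const.add continuousAt_snd)

lemma continuousOn_excessSaving (hf : ProdAssump G f f' f'') (hs : SavAssump s) {k : ℝ}
    (hk : 0 < k) (p : ℝ) : ContinuousOn (excessSaving G f f' s k p) (Ioi 0) := fun x hx =>
  (((continuousAt_savings hf hs hk hx).comp (f := fun y => (k, y))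
    (continuousAt_const.prodMk continuousAt_id)).sub (by fun_prop)).continuousWithinAt

lemma excessSaving_neg (hf : ProdAssump G f f' f'') (hs : SavAssump s) {k p x : ℝ}
    (hk : 0 < k) (hp : 0 ≤ p) (hx : 0 < x) (hwx : wage f f' k ≤ G * x) :
    excessSaving G f f' s k p x < 0 := by
  have := (hs.2.1 _ (hf.wage_pos hk) _ (hf.2.2.2.2.2.1 x hx)).2
  simp only [excessSaving]
  linarith

lemma exists_isGsol_ge (hf : ProdAssump G f f' f'') (hs : SavAssump s) {k p x₀ : ℝ}
    (hk : 0 < k) (hp : 0 ≤ p) (hx₀ : 0 < x₀) (h₀ : 0 ≤ excessSaving G f f' s k p x₀) :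
    ∃ x, IsGsol G f f' s k p x ∧ x₀ ≤ x := by
  set x₁ := max x₀ (wage f f' k / G)
  have hx₀₁ : x₀ ≤ x₁ := le_max_left _ _
  have h₁ : excessSaving G f f' s k p x₁ < 0 :=
    excessSaving_neg hf hs hk hp (hx₀.trans_le hx₀₁) ((div_le_iff₀' hf.1).1 (le_max_right _ _))
  obtain ⟨x, hx, hx0⟩ := intermediate_value_Icc' hx₀₁
    ((continuousOn_excessSaving hf hs hk p).mono fun y hy => hx₀.trans_le hy.1) ⟨h₁.le, h₀⟩
  exact ⟨x, isGsol_iff.2 ⟨hx₀.trans_le hx.1, hx0⟩, hx.1⟩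

/- At `x₀ = min 1 (s(w, f'(1)) / G)` savings already cover investment, since
`s(w, f'(x₀)) ≥ s(w, f'(1)) ≥ G x₀`. -/
lemma exists_isGsol_zero (hf : ProdAssump G f f' f'') (hs : SavAssump s) {k : ℝ} (hk : 0 < k) :
    ∃ x, IsGsol G f f' s k 0 x := by
  have hc := (hs.2.1 _ (hf.wage_pos hk) _ (hf.2.2.2.2.2.1 1 one_pos)).1
  set x₀ := min 1 (s (wage f f' k) (f' 1) / G)
  have hx₀ : 0 < x₀ := lt_min one_pos (div_pos hc hf.1)
  have h₀ : 0 ≤ excessSaving G f f' s k 0 x₀ := by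
    have := (le_div_iff₀' hf.1).1 (min_le_right _ _ : x₀ ≤ _)
    have := antitoneOn_savings hf hs hk hx₀ (one_pos : (0:ℝ) < 1) (min_le_left _ _)
    simp only [excessSaving] at *
    linarith
  obtain ⟨x, hx, -⟩ := exists_isGsol_ge hf hs hk le_rfl hx₀ h₀
  exact ⟨x, hx⟩

lemma isGsol_unique (hf : ProdAssump G f f' f'') (hs : SavAssump s) {k p x x' : ℝ}
    (hk : 0 < k) (hx : IsGsol G f f' s k p x) (hx' : IsGsol G f f' s k p x') : x = x' := by
  rw [isGsol_iff] at hx hx'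
  exact (excessSaving_strictAntiOn hf hs hk p).injOn hx.1 hx'.1 (hx.2.trans hx'.2.symm)

lemma IsGsol.lt_of_excessSaving_pos (hf : ProdAssump G f f' f'') (hs : SavAssump s)
    {k p x c : ℝ} (hk : 0 < k) (hx : IsGsol G f f' s k p x) (hc : 0 < c)
    (h : 0 < excessSaving G f f' s k p c) : c < x := by
  rw [isGsol_iff] at hx
  exact ((excessSaving_strictAntiOn hf hs hk p).lt_iff_gt hx.1 hc).1 (by rwa [hx.2])

lemma IsGsol.lt_of_lt_mul (hf : ProdAssump G f f' f'') (hs : SavAssump s) {k x : ℝ}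
    (hk : 0 < k) (hx : IsGsol G f f' s k 0 x) (hfk : f k < G * k) : x < k := by
  have hsw := (hs.2.1 _ (hf.wage_pos hk) _ (hf.2.2.2.2.2.1 x hx.1)).2
  have := mul_pos hk (hf.2.2.2.2.2.1 k hk)
  have hGx : G * x < G * k := by
    have := hx.2
    simp only [wage] at hsw
    linarith
  exact lt_of_mul_lt_mul_left hGx hf.1.le

lemma exists_isGsol_ge_of_le (hf : ProdAssump G f f' f'') (hs : SavAssump s)
    {k k' p p' x : ℝ} (hk : 0 < k) (hx : IsGsol G f f' s k p x) (hkk' : k ≤ k')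
    (hp' : 0 ≤ p') (hpp' : p' ≤ p) : ∃ x', IsGsol G f f' s k' p' x' ∧ x ≤ x' := by
  refine exists_isGsol_ge hf hs (hk.trans_le hkk') hp' hx.1 ?_
  have := (excessSaving_strictMonoOn_left hf hs p hx.1).monotoneOn hk (hk.trans_le hkk') hkk'
  have := (isGsol_iff.1 hx).2
  simp only [excessSaving] at *
  linarith

/-- Lemma `lem:g`: uniqueness of the solution `g(k,p)`, existence of
`g(k,0)`, `g(k,0) < k` for large `k`, continuity and strict monotonicity of `g` on
its domain, and the comparison property. -/
theorem stmt2 (G : ℝ) (f f' f'' : ℝ → ℝ) (s : ℝ → ℝ → ℝ)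
    (hf : ProdAssump G f f' f'') (hs : SavAssump s) :
    (∀ k p x x' : ℝ, 0 < k → 0 ≤ p →
      IsGsol G f f' s k p x → IsGsol G f f' s k p x' → x = x') ∧
    (∀ k > (0:ℝ), ∃ x : ℝ, IsGsol G f f' s k 0 x) ∧
    (∃ K > (0:ℝ), ∀ k ≥ K, ∀ x : ℝ, IsGsol G f f' s k 0 x → x < k) ∧
    (∀ gfun : ℝ → ℝ → ℝ,
      (∀ k p : ℝ, (k, p) ∈ domg G f f' s → IsGsol G f f' s k p (gfun k p)) →
      ContinuousOn (fun kp : ℝ × ℝ => gfun kp.1 kp.2) (domg G f f' s) ∧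
      (∀ p k k' : ℝ, (k, p) ∈ domg G f f' s → (k', p) ∈ domg G f f' s →
        k < k' → gfun k p < gfun k' p) ∧
      (∀ k p p' : ℝ, (k, p) ∈ domg G f f' s → (k, p') ∈ domg G f f' s →
        p < p' → gfun k p' < gfun k p)) ∧
    (∀ k k' p p' : ℝ, (k, p) ∈ domg G f f' s → k ≤ k' → 0 ≤ p' → p' ≤ p →
      (k', p') ∈ domg G f f' s ∧
      ∀ x x' : ℝ, IsGsol G f f' s k p x → IsGsol G f f' s k' p' x' → x ≤ x') := by
  refine ⟨fun k p x x' hk _ => isGsol_unique hf hs hk, fun k hk => exists_isGsol_zero hf hs hk,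
    ?_, fun gfun hg => ⟨?_, ?_, ?_⟩, ?_⟩
  · obtain ⟨K, hK, hfK⟩ := hf.exists_lt_mul
    exact ⟨K, hK, fun k hk x hx => hx.lt_of_lt_mul hf hs (hK.trans_le hk) (hfK k hk)⟩
  · exact continuousOn_of_strictAntiOn_of_apply_eq_zero
      (F := fun kp x => excessSaving G f f' s kp.1 kp.2 x)
      (fun kp hkp => excessSaving_strictAntiOn hf hs hkp.1 kp.2)
      (fun kp hkp _ hb => continuousAt_excessSaving_param hf hs hkp.1 hb)
      (fun kp hkp => isGsol_iff.1 (hg kp.1 kp.2 hkp))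
  · intro p k k' hk hk' hkk'
    have hx := isGsol_iff.1 (hg k p hk)
    refine (hg k' p hk').lt_of_excessSaving_pos hf hs hk'.1 hx.1 ?_
    exact hx.2 ▸ excessSaving_strictMonoOn_left hf hs p hx.1 hk.1 hk'.1 hkk'
  · intro k p p' hk hk' hpp'
    refine (hg k p hk).lt_of_excessSaving_pos hf hs hk.1 (hg k p' hk').1 ?_
    have := (isGsol_iff.1 (hg k p' hk')).2
    simp only [excessSaving] at *
    linarith
  · rintro k k' p p' ⟨hk, -, x, hx⟩ hkk' hp' hpp'
    obtain ⟨x', hx', hxx'⟩ := exists_isGsol_ge_of_le hf hs hk hx hkk' hp' hpp'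
    refine ⟨⟨hk.trans_le hkk', hp', x', hx'⟩, fun y y' hy hy' => ?_⟩
    rw [isGsol_unique hf hs hk hy hx, isGsol_unique hf hs (hk.trans_le hkk') hy' hx']
    exact hxx'
end
end

section
/- In any equilibrium, for all t ≥ 0: f(k_t) − k_t·f'(k_t) > 0, G·k_{t+1} ≤ f(k_t), p_t ≤ f(k_t), and moreover sup_{t≥0} k_t < ∞. -/
open Filter Topology Set

noncomputable section

/-- Lemma `lem:k`: in any equilibrium, wages are positive,
`G k_{t+1} ≤ f(k_t)`, `p_t ≤ f(k_t)`, and `sup_t k_t < ∞`. -/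
theorem stmt3 (G : ℝ) (f f' f'' : ℝ → ℝ) (s : ℝ → ℝ → ℝ)
    (hf : ProdAssump G f f' f'') (hs : SavAssump s)
    (k0 : ℝ) (hk0 : 0 < k0) (d : ℕ → ℝ) (hd : ∀ t ≥ 1, 0 ≤ d t)
    (k p : ℕ → ℝ) (heq : IsEquilibrium G f f' s k0 d k p) :
    (∀ t, 0 < f (k t) - k t * f' (k t)) ∧
    (∀ t, G * k (t + 1) ≤ f (k t)) ∧
    (∀ t, p t ≤ f (k t)) ∧
    BddAbove (Set.range k) := by
  obtain ⟨hG, hfpos, hfd, hf'd, hf''c, hf'pos, hf''neg, hf'bot, L, hLG, hL⟩ := hf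
  obtain ⟨hkpos, hppos, hk0eq, hacc, hprice⟩ := heq
  -- f' is strictly decreasing on (0,∞)
  have hf'cont : ContinuousOn f' (Ioi 0) := fun x hx =>
    ((hf'd x hx).continuousAt).continuousWithinAt
  have hanti : StrictAntiOn f' (Ioi 0) := by
    apply strictAntiOn_of_deriv_neg (convex_Ioi 0) hf'cont
    intro x hx
    rw [interior_Ioi] at hx
    rw [(hf'd x hx).deriv]
    exact hf''neg x hx
  have hfcont : ContinuousOn f (Ioi 0) := fun x hx =>
    ((hfd x hx).continuousAt).continuousWithinAt
  have hmono : StrictMonoOn f (Ioi 0) := by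
    apply strictMonoOn_of_deriv_pos (convex_Ioi 0) hfcont
    intro x hx
    rw [interior_Ioi] at hx
    rw [(hfd x hx).deriv]
    exact hf'pos x hx
  -- concavity-type inequality: for 0 < a < b, f' b * (b - a) < f b - f a
  have hconc : ∀ a b : ℝ, 0 < a → a < b → f' b * (b - a) < f b - f a := by
    intro a b ha hab
    have hcc : ContinuousOn f (Icc a b) := hfcont.mono (by
      intro x hx; exact lt_of_lt_of_le ha hx.1)
    obtain ⟨c, hc, hslope⟩ := exists_hasDerivAt_eq_slope f f' hab hcc
      (fun x hx => hfd x (lt_trans ha hx.1))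
    have hcpos : 0 < c := lt_trans ha hc.1
    have hbpos : 0 < b := lt_trans ha hab
    have hlt : f' b < f' c := hanti (mem_Ioi.2 hcpos) (mem_Ioi.2 hbpos) hc.2
    have hba : 0 < b - a := by linarith
    have : f b - f a = f' c * (b - a) := by
      field_simp at hslope
      linarith [hslope]
    rw [this]
    exact mul_lt_mul_of_pos_right hlt hba
  -- x * f' x ≤ f x  for x > 0
  have hle : ∀ x : ℝ, 0 < x → x * f' x ≤ f x := by
    intro x hx
    have hten : Tendsto (fun b : ℝ => f' x * (x - b)) (nhdsWithin 0 (Ioi 0))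
        (nhds (x * f' x)) := by
      have : Tendsto (fun b : ℝ => f' x * (x - b)) (nhds 0) (nhds (f' x * (x - 0))) := by
        exact (tendsto_const_nhds.mul (tendsto_const_nhds.sub tendsto_id))
      simpa [mul_comm] using this.mono_left nhdsWithin_le_nhds
    refine le_of_tendsto hten ?_
    filter_upwards [Ioo_mem_nhdsGT_of_mem (by simp [hx] : (0:ℝ) ∈ Ico (0:ℝ) x)]
      with b hb
    have h1 := hconc b x hb.1 hb.2
    have h2 := hfpos b hb.1
    linarith
  -- wage positivity
  have hwage : ∀ x : ℝ, 0 < x → 0 < f x - x * f' x := by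
    intro x hx
    have ha : (0:ℝ) < x / 2 := by linarith
    have hax : x / 2 < x := by linarith
    have h1 := hconc (x / 2) x ha hax
    have h2 := hle (x / 2) ha
    have h3 : f' x < f' (x / 2) := hanti (mem_Ioi.2 ha) (mem_Ioi.2 hx) hax
    nlinarith
  have hwaget : ∀ t, 0 < f (k t) - k t * f' (k t) := fun t => hwage (k t) (hkpos t)
  -- savings bounds
  obtain ⟨_, hsb, _, _⟩ := hs
  have hsav : ∀ t, 0 < s (f (k t) - k t * f' (k t)) (f' (k (t + 1))) ∧
      s (f (k t) - k t * f' (k t)) (f' (k (t + 1))) < f (k t) - k t * f' (k t) :=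
    fun t => hsb _ (hwaget t) _ (hf'pos _ (hkpos (t + 1)))
  have hGk : ∀ t, G * k (t + 1) ≤ f (k t) := by
    intro t
    have h1 := hacc t
    have h2 := (hsav t).2
    have h3 := hppos t
    have h4 : 0 < k t * f' (k t) := mul_pos (hkpos t) (hf'pos _ (hkpos t))
    linarith
  have hpk : ∀ t, p t ≤ f (k t) := by
    intro t
    have h1 := hacc t
    have h2 := (hsav t).2
    have h4 : 0 < k t * f' (k t) := mul_pos (hkpos t) (hf'pos _ (hkpos t))
    have h5 : 0 < G * k (t + 1) := mul_pos hG (hkpos (t + 1))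
    linarith
  refine ⟨hwaget, hGk, hpk, ?_⟩
  -- boundedness of capital
  set G' : ℝ := (L + G) / 2 with hG'def
  have hLG' : L < G' := by simp [hG'def]; linarith
  have hG'G : G' < G := by simp [hG'def]; linarith
  have hLnn : 0 ≤ L := by
    refine ge_of_tendsto hL ?_
    filter_upwards [eventually_ge_atTop (1:ℝ)] with x hx
    exact (hf'pos x (by linarith)).le
  obtain ⟨A0, hA0⟩ := (eventually_atTop.1 (hL.eventually_lt_const hLG'))
  set A : ℝ := max A0 1 with hAdef
  have hApos : (0:ℝ) < A := lt_of_lt_of_le one_pos (le_max_right _ _)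
  have hA : ∀ x : ℝ, A ≤ x → f' x ≤ G' := by
    intro x hx
    exact (hA0 x (le_trans (le_max_left _ _) hx)).le
  set B : ℝ := max (max A k0) (f A / (G - G')) with hBdef
  have hBA : A ≤ B := le_trans (le_max_left _ _) (le_max_left _ _)
  have hBk0 : k0 ≤ B := le_trans (le_max_right _ _) (le_max_left _ _)
  have hBpos : 0 < B := lt_of_lt_of_le hApos hBA
  have hGG' : 0 < G - G' := by linarith
  have hfA : f A ≤ (G - G') * B := by
    have : f A / (G - G') ≤ B := le_max_right _ _
    calc f A = f A / (G - G') * (G - G') := by field_simp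
    _ ≤ B * (G - G') := by exact mul_le_mul_of_nonneg_right this hGG'.le
    _ = (G - G') * B := by ring
  -- f B ≤ G * B
  have hfB : f B ≤ G * B := by
    have hstep : f B - f A ≤ G' * (B - A) := by
      rcases eq_or_lt_of_le hBA with h | h
      · simp [← h]
      · have hcc : ContinuousOn f (Icc A B) := hfcont.mono (by
          intro x hx; exact lt_of_lt_of_le hApos hx.1)
        obtain ⟨c, hc, hslope⟩ := exists_hasDerivAt_eq_slope f f' h hcc
          (fun x hx => hfd x (lt_trans hApos hx.1))
        have hBA' : 0 < B - A := by linarith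
        have : f B - f A = f' c * (B - A) := by
          field_simp at hslope
          linarith [hslope]
        rw [this]
        exact mul_le_mul_of_nonneg_right (hA c hc.1.le) hBA'.le
    have hG'A : 0 ≤ G' * A := mul_nonneg (by linarith) hApos.le
    linarith
  have hbound : ∀ t, k t ≤ B := by
    intro t
    induction t with
    | zero => rw [hk0eq]; exact hBk0
    | succ n ih =>
      have h1 : G * k (n + 1) ≤ f (k n) := hGk n
      have h2 : f (k n) ≤ f B := by
        rcases eq_or_lt_of_le ih with h | h
        · rw [h]
        · exact (hmono (mem_Ioi.2 (hkpos n)) (mem_Ioi.2 hBpos) h).le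
      have : G * k (n + 1) ≤ G * B := by linarith
      exact le_of_mul_le_mul_left this hG
  exact ⟨B, by rintro x ⟨t, rfl⟩; exact hbound t⟩

end
end

section
/- If (k_t, p_t)_{t≥0} and (k'_t, p'_t)_{t≥0} are two bubbleless equilibria with the same initial capital and the same dividends, then k_t = k'_t and p_t = p'_t for all t. Moreover, if (k_t, p_t) is a bubbleless equilibrium and (k'_t, p'_t) is any equilibrium with the same initial capital and dividends, then p_0 ≤ p'_0. -/
open Filter Topology Set

noncomputable section

/-!
Two equilibria with the same initial capital are ordered by their initial prices: if
`p'₀ ≤ p₀`, then by induction `k_t ≤ k'_t` and `p'_t ≤ p_t` for all `t`, because a lower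
asset price and higher capital (hence higher wage) leave more savings for capital, and the
no-arbitrage equation then propagates the price ordering. Higher capital means lower interest
factors `R_t = f'(k_t)`, hence higher discount factors `q_t`. Iterating the price equation,
`p₀ = ∑_{t ≤ T} q_t D_t + q_T P_T ≥ ∑_{t ≤ T} q_t D_t`, so every equilibrium price is at least
its fundamental value, with equality in the limit for a bubbleless one. If a bubbleless
equilibrium had `p'₀ < p₀`, then `p₀ = ∑ q_t D_t ≤ ∑ q'_t D_t ≤ p'₀`, a contradiction. Applied
in both directions this gives equal initial prices, and the ordering gives equal paths.
-/

section Technology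

variable {f f' : ℝ → ℝ}

theorem add_deriv_mul_sub_le (hf : ∀ x > 0, HasDerivAt f (f' x) x)
    (hf' : StrictAntiOn f' (Ioi 0)) {a b : ℝ} (ha : 0 < a) (hab : a < b) :
    f a + f' b * (b - a) ≤ f b := by
  obtain ⟨c, ⟨hac, hcb⟩, hc⟩ := exists_hasDerivAt_eq_slope f f' hab
    (fun x hx => (hf x (ha.trans_le hx.1)).continuousAt.continuousWithinAt)
    (fun x hx => hf x (ha.trans hx.1))
  have hslope : f' b ≤ (f b - f a) / (b - a) :=
    hc ▸ (hf' (ha.trans hac) (ha.trans hab) hcb).le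
  rw [le_div_iff₀ (sub_pos.2 hab)] at hslope
  linarith

theorem strictMonoOn_wage (hf : ∀ x > 0, HasDerivAt f (f' x) x)
    (hf' : StrictAntiOn f' (Ioi 0)) : StrictMonoOn (fun k => f k - k * f' k) (Ioi 0) := by
  intro a ha b hb hab
  have htangent := add_deriv_mul_sub_le hf hf' ha hab
  have hR : f' b < f' a := hf' ha hb hab
  have ha' : (0 : ℝ) < a := ha
  nlinarith

theorem wage_pos (hpos : ∀ x > 0, 0 < f x) (hf : ∀ x > 0, HasDerivAt f (f' x) x)
    (hf' : StrictAntiOn f' (Ioi 0)) {k : ℝ} (hk : 0 < k) : 0 < f k - k * f' k := by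
  have hnonneg : ∀ b > 0, 0 ≤ f b - b * f' b := by
    intro b hb
    -- the tangent at `b` lies below `f`, so the wage is at least `f ε - ε f'(b) > -ε f'(b)`
    have hlim : Tendsto (fun ε => -(ε * f' b)) (𝓝[>] 0) (𝓝 0) := by
      have : Continuous fun ε : ℝ => -(ε * f' b) := by fun_prop
      simpa using (this.tendsto 0).mono_left nhdsWithin_le_nhds
    refine le_of_tendsto hlim ?_
    filter_upwards [Ioo_mem_nhdsGT hb] with ε hε
    have := add_deriv_mul_sub_le hf hf' hε.1 hε.2
    linarith [hpos ε hε.1]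
  calc (0 : ℝ) ≤ f (k / 2) - k / 2 * f' (k / 2) := hnonneg _ (half_pos hk)
    _ < f k - k * f' k := strictMonoOn_wage hf hf' (half_pos hk) hk (half_lt_self hk)

end Technology

theorem qseq_succ (f' : ℝ → ℝ) (k : ℕ → ℝ) (t : ℕ) :
    qseq f' k (t + 1) = qseq f' k t / f' (k (t + 1)) := by
  simp only [qseq, Finset.prod_range_succ, mul_inv, div_eq_mul_inv]

theorem qseq_pos {f' : ℝ → ℝ} {k : ℕ → ℝ} (hR : ∀ t, 0 < f' (k (t + 1))) (t : ℕ) :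
    0 < qseq f' k t :=
  inv_pos.2 (Finset.prod_pos fun i _ => hR i)

theorem qseq_le_qseq {f' : ℝ → ℝ} {k k' : ℕ → ℝ} (hR' : ∀ t, 0 < f' (k' (t + 1)))
    (hR : ∀ t, f' (k' (t + 1)) ≤ f' (k (t + 1))) (t : ℕ) : qseq f' k t ≤ qseq f' k' t :=
  inv_anti₀ (Finset.prod_pos fun i _ => hR' i)
    (Finset.prod_le_prod (fun i _ => (hR' i).le) fun i _ => hR i)

theorem sum_range_qseq_mul_Dseq {G : ℝ} {f' : ℝ → ℝ} {d k p : ℕ → ℝ} (hG : G ≠ 0)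
    (hR : ∀ t, f' (k (t + 1)) ≠ 0)
    (hprice : ∀ t, p (t + 1) = f' (k (t + 1)) / G * p t - d (t + 1)) (T : ℕ) :
    ∑ n ∈ Finset.range T, qseq f' k (n + 1) * Dseq G d (n + 1)
      = p 0 - qseq f' k T * (G ^ T * p T) := by
  induction T with
  | zero => simp [qseq]
  | succ T ih =>
    rw [Finset.sum_range_succ, ih, qseq_succ, hprice, Dseq]
    field_simp [hR T]
    ring

section Equilibrium

variable {G : ℝ} {f f' f'' : ℝ → ℝ} {s : ℝ → ℝ → ℝ}

theorem ProdAssump.strictAntiOn_deriv_s6 (hf : ProdAssump G f f' f'') :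
    StrictAntiOn f' (Ioi 0) := by
  obtain ⟨-, -, -, hf', -, -, hf'', -⟩ := hf
  refine strictAntiOn_of_hasDerivWithinAt_neg (f' := f'') (convex_Ioi 0)
    (fun x hx => (hf' x hx).continuousAt.continuousWithinAt) ?_ ?_ <;> rw [interior_Ioi]
  · exact fun x hx => (hf' x hx).hasDerivWithinAt
  · exact hf''

theorem IsGsol.le_of_le (hf : ProdAssump G f f' f'') (hs : SavAssump s) {k₁ k₂ p₁ p₂ x₁ x₂ : ℝ}
    (h₁ : IsGsol G f f' s k₁ p₁ x₁) (h₂ : IsGsol G f f' s k₂ p₂ x₂)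
    (hk₁ : 0 < k₁) (hk : k₁ ≤ k₂) (hp : p₂ ≤ p₁) : x₁ ≤ x₂ := by
  have hanti := hf.strictAntiOn_deriv_s6
  obtain ⟨hG, hfpos, hfd, -, -, hf'pos, -, -⟩ := hf
  obtain ⟨-, -, hs_w, hs_R⟩ := hs
  obtain ⟨hx₁, e₁⟩ := h₁
  obtain ⟨hx₂, e₂⟩ := h₂
  by_contra! hlt
  have hw₁ := wage_pos hfpos hfd hanti hk₁
  have hw := (strictMonoOn_wage hfd hanti).monotoneOn hk₁ (hk₁.trans_le hk) hk
  have hR₁ := hf'pos _ hx₁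
  have hR₂ := hf'pos _ hx₂
  -- if `x₂ < x₁`, the second agent has the higher wage and the higher return, so saves more
  have hsav : s (f k₁ - k₁ * f' k₁) (f' x₁) ≤ s (f k₂ - k₂ * f' k₂) (f' x₂) :=
    (hs_R _ hw₁ hR₁ hR₂ (hanti hx₂ hx₁ hlt).le).trans
      ((hs_w _ hR₂).monotoneOn hw₁ (hw₁.trans_le hw) hw)
  nlinarith [mul_pos hG (sub_pos.2 hlt)]

namespace IsEquilibrium

variable {k0 : ℝ} {d k p k' p' : ℕ → ℝ}

theorem deriv_pos (hf : ProdAssump G f f' f'') (heq : IsEquilibrium G f f' s k0 d k p) (t : ℕ) :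
    0 < f' (k t) :=
  hf.2.2.2.2.2.1 _ (heq.1 t)

theorem isGsol (heq : IsEquilibrium G f f' s k0 d k p) (t : ℕ) :
    IsGsol G f f' s (k t) (p t) (k (t + 1)) :=
  ⟨heq.1 _, heq.2.2.2.1 t⟩

theorem le_of_price_zero_le (hf : ProdAssump G f f' f'') (hs : SavAssump s)
    (heq : IsEquilibrium G f f' s k0 d k p) (heq' : IsEquilibrium G f f' s k0 d k' p')
    (hp0 : p' 0 ≤ p 0) (t : ℕ) : k t ≤ k' t ∧ p' t ≤ p t := by
  induction t with
  | zero => exact ⟨(heq.2.2.1.trans heq'.2.2.1.symm).le, hp0⟩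
  | succ t ih =>
    have hk := (heq.isGsol t).le_of_le hf hs (heq'.isGsol t) (heq.1 t) ih.1 ih.2
    have hR := hf.strictAntiOn_deriv_s6.antitoneOn (heq.1 _) (heq'.1 _) hk
    refine ⟨hk, ?_⟩
    rw [heq.2.2.2.2 t, heq'.2.2.2.2 t]
    have hG := hf.1.le
    exact sub_le_sub_right (mul_le_mul (div_le_div_of_nonneg_right hR hG) ih.2 (heq'.2.1 t)
      (div_nonneg (heq.deriv_pos hf _).le hG)) _

theorem sum_range_qseq_mul_Dseq_le (hf : ProdAssump G f f' f'')
    (heq : IsEquilibrium G f f' s k0 d k p) (T : ℕ) :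
    ∑ n ∈ Finset.range T, qseq f' k (n + 1) * Dseq G d (n + 1) ≤ p 0 := by
  have hR t : 0 < f' (k (t + 1)) := heq.deriv_pos hf _
  rw [sum_range_qseq_mul_Dseq hf.1.ne' (fun t => (hR t).ne') heq.2.2.2.2 T]
  have := mul_nonneg (qseq_pos hR T).le (mul_nonneg (pow_nonneg hf.1.le T) (heq.2.1 T))
  linarith

end IsEquilibrium

theorem Bubbleless.price_zero_eq_tsum {G : ℝ} {f' : ℝ → ℝ} {d k p : ℕ → ℝ}
    (hbl : Bubbleless G f' k p d) :
    p 0 = ∑' n, qseq f' k (n + 1) * Dseq G d (n + 1) := by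
  have hq0 : qseq f' k 0 = 1 := by simp [qseq]
  have h := hbl 0
  simp only [bubble, fundval, pow_zero, inv_one, hq0, one_mul, zero_add, sub_eq_zero] at h
  simpa only [add_comm 1] using h

theorem Bubbleless.price_zero_le (hf : ProdAssump G f f' f'') (hs : SavAssump s) {k0 : ℝ}
    {d k p k' p' : ℕ → ℝ} (hd : ∀ t ≥ 1, 0 ≤ d t) (heq : IsEquilibrium G f f' s k0 d k p)
    (hbl : Bubbleless G f' k p d) (heq' : IsEquilibrium G f f' s k0 d k' p') :
    p 0 ≤ p' 0 := by
  by_contra! hlt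
  have hq := qseq_le_qseq (fun t => heq'.deriv_pos hf _) fun t => hf.strictAntiOn_deriv_s6.antitoneOn (heq.1 _) (heq'.1 _)
    (heq.le_of_price_zero_le hf hs heq' hlt.le (t + 1)).1
  have hD n : 0 ≤ Dseq G d (n + 1) := mul_nonneg (pow_nonneg hf.1.le _) (hd _ n.succ_pos)
  -- `p` is its own fundamental value, which the larger discount factors of `k'` push below `p' 0`
  have : p 0 ≤ p' 0 := by
    rw [hbl.price_zero_eq_tsum]
    refine Real.tsum_le_of_sum_range_le
      (fun n => mul_nonneg (qseq_pos (fun t => heq.deriv_pos hf _) _).le (hD n))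
      fun T => ?_
    calc ∑ n ∈ Finset.range T, qseq f' k (n + 1) * Dseq G d (n + 1)
        ≤ ∑ n ∈ Finset.range T, qseq f' k' (n + 1) * Dseq G d (n + 1) :=
          Finset.sum_le_sum fun n _ => mul_le_mul_of_nonneg_right (hq _) (hD n)
      _ ≤ p' 0 := heq'.sum_range_qseq_mul_Dseq_le hf T
  exact hlt.not_ge this

end Equilibrium

theorem stmt6_general (G : ℝ) (f f' f'' : ℝ → ℝ) (s : ℝ → ℝ → ℝ)
    (hf : ProdAssump G f f' f'') (hs : SavAssump s)
    (k0 : ℝ) (d : ℕ → ℝ) (hd : ∀ t ≥ 1, 0 ≤ d t)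
    (k p : ℕ → ℝ)
    (heq : IsEquilibrium G f f' s k0 d k p)
    (hbl : Bubbleless G f' k p d) :
    (∀ k' p' : ℕ → ℝ, IsEquilibrium G f f' s k0 d k' p' → Bubbleless G f' k' p' d →
      (∀ t, k t = k' t) ∧ (∀ t, p t = p' t)) ∧
    (∀ k' p' : ℕ → ℝ, IsEquilibrium G f f' s k0 d k' p' → p 0 ≤ p' 0) := by
  have hmin k' p' (heq' : IsEquilibrium G f f' s k0 d k' p') : p 0 ≤ p' 0 :=
    hbl.price_zero_le hf hs hd heq heq'
  refine ⟨fun k' p' heq' hbl' => ?_, hmin⟩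
  have h₁ := heq.le_of_price_zero_le hf hs heq' (hbl'.price_zero_le hf hs hd heq' heq)
  have h₂ := heq'.le_of_price_zero_le hf hs heq (hmin k' p' heq')
  exact ⟨fun t => (h₁ t).1.antisymm (h₂ t).1, fun t => (h₂ t).2.antisymm (h₁ t).2⟩

/-- Corollary `cor:unique_bubbleless`: there is at most one
bubbleless equilibrium, and it has the smallest initial price among all equilibria. -/
theorem stmt6 (G : ℝ) (f f' f'' : ℝ → ℝ) (s : ℝ → ℝ → ℝ)
    (hf : ProdAssump G f f' f'') (hs : SavAssump s)
    (k0 : ℝ) (hk0 : 0 < k0) (d : ℕ → ℝ) (hd : ∀ t ≥ 1, 0 ≤ d t)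
    (k p : ℕ → ℝ)
    (heq : IsEquilibrium G f f' s k0 d k p)
    (hbl : Bubbleless G f' k p d) :
    (∀ k' p' : ℕ → ℝ, IsEquilibrium G f f' s k0 d k' p' → Bubbleless G f' k' p' d →
      (∀ t, k t = k' t) ∧ (∀ t, p t = p' t)) ∧
    (∀ k' p' : ℕ → ℝ, IsEquilibrium G f f' s k0 d k' p' → p 0 ≤ p' 0) :=
  stmt6_general G f f' f'' s hf hs k0 d hd k p heq hbl

end
end
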